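/- Let n ≥ 1 and let g(y,p,q) = r(y) + p₁ + Σᵢ₌₂ⁿ (pᵢ + P̃ᵢ(p,q))·y^{2i−2} + Σᵢ₌₁ⁿ Q̃ᵢ(p,q)·y^{2i−1} + φ(y,p,q)·y^{2n} and g′(y,p,q) = r′(y) + p₁ + Σᵢ₌₂ⁿ (pᵢ + P̃ᵢ′(p,q))·y^{2i−2} + Σᵢ₌₁ⁿ Q̃ᵢ′(p,q)·y^{2i−1} + φ′(y,p,q)·y^{2n} be two smooth germs at 0 ∈ ℝ^{2n+1} in normal form, i.e. r(0)=r′(0)=0, dr/dy(0) ≠ 0, dr′/dy(0) ≠ 0, φ(y,0,0)=φ′(y,0,0)=0, ∂Q̃ᵢ/∂qᵢ(0) ≠ 0 and ∂Q̃ᵢ′/∂qᵢ(0) ≠ 0 for i = 1,…,n, P̃ᵢ, P̃ᵢ′ ∈ I_{2i−2} for i = 2,…,n, and Q̃ᵢ, Q̃ᵢ′ ∈ I_{2i−1} for i = 1,…,n. If there exists a local symplectomorphism Ψ of ω₁ on ℝ^{2n+2} such that on a neighbourhood of 0 the second component of Ψ equals y (i.e. y∘Ψ = y) and (x² + g′(y,p,q))∘Ψ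 = x² + g(y,p,q), then r = r′, φ = φ′, P̃ᵢ = P̃ᵢ′ (i = 2,…,n) and Q̃ᵢ = Q̃ᵢ′ (i = 1,…,n) as germs at 0, i.e. the functions r, φ, P̃ᵢ, Q̃ᵢ are functional invariants of the normal form. -/

import Mathlib

open Filter Topology

noncomputable section

/-- `ℝ^{2n}` with coordinates `(p, q) = (p₁,…,pₙ,q₁,…,qₙ)`. -/
abbrev PQ (n : ℕ) : Type := (Fin n → ℝ) × (Fin n → ℝ)

/-- A smooth germ at `0`: a function which is `C^∞` on some neighbourhood of `0`. -/
def SmoothGerm {E F : Type*} [NormedAddCommGroup E] [NormedSpace ℝ E]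
    [NormedAddCommGroup F] [NormedSpace ℝ F] (f : E → F) : Prop :=
  ∃ U ∈ 𝓝 (0 : E), ContDiffOn ℝ (⊤ : ℕ∞) f U

/-- The standard symplectic form `ω₀ = Σᵢ dpᵢ∧dqᵢ` on `ℝ^{2n}` as a constant
alternating bilinear form. -/
def omega0 (n : ℕ) (u v : PQ n) : ℝ := ∑ i : Fin n, (u.1 i * v.2 i - u.2 i * v.1 i)

/-- A local symplectomorphism of `ω₀`: `Ψ(0) = 0`, smooth near `0`, invertible
derivative, and `DΨ(z)` preserves `ω₀` for all `z` near `0`. -/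
def IsLocalSymp (n : ℕ) (Ψ : PQ n → PQ n) : Prop :=
  Ψ 0 = 0 ∧ SmoothGerm Ψ ∧ Function.Bijective ⇑(fderiv ℝ Ψ 0) ∧
    ∀ᶠ z in 𝓝 (0 : PQ n), ∀ u v : PQ n,
      omega0 n (fderiv ℝ Ψ z u) (fderiv ℝ Ψ z v) = omega0 n u v

/-- The `j`-th generator (0-indexed) of the list `q₁,p₁,q₂,p₂,…,qₙ,pₙ`. -/
def genFun (n j : ℕ) (z : PQ n) : ℝ :=
  if h : j / 2 < n then (if j % 2 = 0 then z.2 ⟨j / 2, h⟩ else z.1 ⟨j / 2, h⟩) else 0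

/-- Membership (as germs at `0`) in the ideal `I_k` generated by the first `k`
functions of the list `q₁,p₁,q₂,p₂,…,qₙ,pₙ`. -/
def InIdeal (n k : ℕ) (g : PQ n → ℝ) : Prop :=
  ∃ c : Fin k → (PQ n → ℝ), (∀ j, SmoothGerm (c j)) ∧
    ∀ᶠ z in 𝓝 (0 : PQ n), g z = ∑ j : Fin k, c j z * genFun n j.1 z

/-- `ℝ^{2n+1}` with coordinates `(y, p, q)`. -/
abbrev YPQ (n : ℕ) : Type := ℝ × PQ n

/-- `ℝ^{2n+2}` with coordinates `(x, y, p, q)`. -/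
abbrev XYPQ (n : ℕ) : Type := ℝ × YPQ n

/-- The standard symplectic form `ω₁ = dx∧dy + Σᵢ dpᵢ∧dqᵢ` on `ℝ^{2n+2}`. -/
def omega1 (n : ℕ) (u v : XYPQ n) : ℝ :=
  u.1 * v.2.1 - u.2.1 * v.1 + omega0 n u.2.2 v.2.2

/-- A local symplectomorphism of `ω₁` on `ℝ^{2n+2}`. -/
def IsLocalSymp1 (n : ℕ) (Ψ : XYPQ n → XYPQ n) : Prop :=
  Ψ 0 = 0 ∧ SmoothGerm Ψ ∧ Function.Bijective ⇑(fderiv ℝ Ψ 0) ∧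
    ∀ᶠ z in 𝓝 (0 : XYPQ n), ∀ u v : XYPQ n,
      omega1 n (fderiv ℝ Ψ z u) (fderiv ℝ Ψ z v) = omega1 n u v

/-- The Poisson bracket of `ω₁` on `ℝ^{2n+2}`:
`{F,G} = ∂ₓF·∂_yG − ∂_yF·∂ₓG + Σᵢ (∂_{pᵢ}F·∂_{qᵢ}G − ∂_{qᵢ}F·∂_{pᵢ}G)`. -/
def pb1 (n : ℕ) (F G : XYPQ n → ℝ) (z : XYPQ n) : ℝ :=
  fderiv ℝ F z ((1, 0) : XYPQ n) * fderiv ℝ G z ((0, 1, 0) : XYPQ n)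
    - fderiv ℝ F z ((0, 1, 0) : XYPQ n) * fderiv ℝ G z ((1, 0) : XYPQ n)
    + ∑ i : Fin n,
      (fderiv ℝ F z ((0, 0, Pi.single i 1, 0) : XYPQ n)
          * fderiv ℝ G z ((0, 0, 0, Pi.single i 1) : XYPQ n)
        - fderiv ℝ F z ((0, 0, 0, Pi.single i 1) : XYPQ n)
          * fderiv ℝ G z ((0, 0, Pi.single i 1, 0) : XYPQ n))

/-- The singularity class `S₁`: first occurring singularities of pairs
`(f, H = {h = 0})` in `(ℝ^{2n+2}, ω₁)`. -/
def InS1 (n : ℕ) (f h : XYPQ n → ℝ) : Prop :=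
  SmoothGerm f ∧ SmoothGerm h ∧ f 0 = 0 ∧ h 0 = 0 ∧
    LinearIndependent ℝ ![fderiv ℝ f 0, fderiv ℝ h 0] ∧
    pb1 n f h 0 = 0 ∧ pb1 n f (pb1 n f h) 0 ≠ 0 ∧ pb1 n h (pb1 n f h) 0 ≠ 0

/-!
Since `Ψ` preserves `y` and `ω₁`, its derivative fixes the Hamiltonian field `∂ₓ` of `y`, so `Ψ`
is a translation in `x`; comparing `x² + g' ∘ Ψ = x² + g` at two values of `x` shows that `Ψ`
also preserves `x`, hence fixes `∂_y`, and `Ψ (x, y, z) = (x, y, Φ z)` for a local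
symplectomorphism `Φ` of `ω₀`. Then `g (y, z) = g' (y, Φ z)`, and comparing the coefficients of
the powers of `y` gives `r = r'`, `φ = φ' ∘ Φ`, `pᵢ + P̃ᵢ = (pᵢ + P̃ᵢ') ∘ Φ` and `Q̃ᵢ = Q̃ᵢ' ∘ Φ`.
Finally `Φ = id`, by induction on `i`: if `Φ` preserves `qⱼ, pⱼ` for `j < i`, then `Φ w - w` is
unchanged when these coordinates of `w` are set to `0` (and `qᵢ` too, once `Φ` preserves `pᵢ`).
At such points the ideal conditions kill `P̃ᵢ, P̃ᵢ', Q̃ᵢ` and make `Q̃ᵢ'` a multiple of `qᵢ` by a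
factor that is `∂Q̃ᵢ'/∂qᵢ (0) ≠ 0` at `0`; so `Φ` preserves `pᵢ`, and then `qᵢ`.
-/

namespace LinearMap.IsOrthogonal

variable {K E : Type*} [Field K] [AddCommGroup E] [Module K E]
  {B : LinearMap.BilinForm K E} {f : E →ₗ[K] E}

theorem injective (hB : B.SeparatingLeft) (hf : B.IsOrthogonal f) : Function.Injective f := by
  refine (injective_iff_map_eq_zero f).mpr fun u hu => hB u fun v => ?_
  rw [← hf u v, hu, map_zero, zero_apply]

theorem apply_eq_self [FiniteDimensional K E] (hB : B.SeparatingLeft) (hf : B.IsOrthogonal f)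
    {ξ : E} (hξ : ∀ v, B ξ (f v) = B ξ v) : f ξ = ξ := by
  have hsurj : Function.Surjective f := injective_iff_surjective.mp (hf.injective hB)
  refine sub_eq_zero.mp (hB _ fun u => ?_)
  obtain ⟨v, rfl⟩ := hsurj u
  rw [map_sub, sub_apply, hf, hξ, sub_self]

end LinearMap.IsOrthogonal

section Calculus

variable {E F : Type*} [NormedAddCommGroup E] [NormedSpace ℝ E]
  [NormedAddCommGroup F] [NormedSpace ℝ F]

theorem SmoothGerm.eventually_differentiableAt {f : E → F} (h : SmoothGerm f) :
    ∀ᶠ z in 𝓝 0, DifferentiableAt ℝ f z := by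
  obtain ⟨U, hU, hf⟩ := h
  filter_upwards [interior_mem_nhds.mpr hU] with z hz
  exact (hf.contDiffAt (mem_interior_iff_mem_nhds.mp hz)).differentiableAt (by simp)

theorem SmoothGerm.eventually_continuousAt {f : E → F} (h : SmoothGerm f) :
    ∀ᶠ z in 𝓝 0, ContinuousAt f z :=
  h.eventually_differentiableAt.mono fun _ hz => hz.continuousAt

theorem fderiv_apply_eq_of_eventually_eq (ℓ : E →L[ℝ] F) {f : E → E} {z : E}
    (hf : DifferentiableAt ℝ f z) (h : ∀ᶠ w in 𝓝 z, ℓ (f w) = ℓ w) (v : E) :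
    ℓ (fderiv ℝ f z v) = ℓ v := by
  have hℓf : HasFDerivAt (fun w => ℓ (f w)) (ℓ.comp (fderiv ℝ f z)) z :=
    ℓ.hasFDerivAt.comp z hf.hasFDerivAt
  exact congrArg (· v) ((hℓf.congr_of_eventuallyEq (h.mono fun _ => Eq.symm)).unique
    ℓ.hasFDerivAt)

theorem sub_eq_sub_of_fderiv_apply_eq {f : E → E} {s : Set E} (hs : IsOpen s)
    (hs' : Convex ℝ s) (hf : ∀ z ∈ s, DifferentiableAt ℝ f z) {a b : E} (ha : a ∈ s)
    (hb : b ∈ s) (hfix : ∀ z ∈ s, fderiv ℝ f z (b - a) = b - a) : f b - b = f a - a := by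
  let L := AffineMap.lineMap (k := ℝ) a b
  have hderiv : ∀ τ ∈ L ⁻¹' s, HasDerivAt (fun τ => f (L τ) - L τ) 0 τ := fun τ hτ => by
    have hL : HasDerivAt L (b - a) τ := AffineMap.hasDerivAt_lineMap
    have h := ((hf _ hτ).hasFDerivAt.comp_hasDerivAt τ hL).sub hL
    rwa [hfix _ hτ, sub_self] at h
  have hconst := (hs.preimage AffineMap.lineMap_continuous).is_const_of_deriv_eq_zero
    (hs'.affine_preimage L).isPreconnected
    (fun τ hτ => (hderiv τ hτ).differentiableAt.differentiableWithinAt)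
    (fun τ hτ => (hderiv τ hτ).deriv) (x := 1) (y := 0) (by simpa [L] using hb)
    (by simpa [L] using ha)
  simpa [L] using hconst

end Calculus

section PreservesForm

variable {E : Type*} [NormedAddCommGroup E] [NormedSpace ℝ E] [FiniteDimensional ℝ E]

def PreservesFormAt (B : LinearMap.BilinForm ℝ E) (f : E → E) (z : E) : Prop :=
  DifferentiableAt ℝ f z ∧ B.IsOrthogonal (fderiv ℝ f z)

/-- `ξ` is the Hamiltonian vector field of the linear function `B ξ`, so a map whose derivative
preserves `B` and which preserves that function also preserves its Hamiltonian field. -/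
theorem PreservesFormAt.fderiv_apply_eq_self {B : LinearMap.BilinForm ℝ E} {f : E → E} {z : E}
    (hB : B.SeparatingLeft) (hf : PreservesFormAt B f z) {ξ : E}
    (hξ : ∀ᶠ w in 𝓝 z, B ξ (f w) = B ξ w) : fderiv ℝ f z ξ = ξ :=
  hf.2.apply_eq_self (f := (fderiv ℝ f z : E →ₗ[ℝ] E)) hB
    (fderiv_apply_eq_of_eventually_eq (LinearMap.toContinuousLinearMap (B ξ)) hf.1 hξ)

end PreservesForm

section SymplecticForms

variable {n : ℕ}

def dp (i : Fin n) : PQ n := (Pi.single i 1, 0)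

def dq (i : Fin n) : PQ n := (0, Pi.single i 1)

def omega0Form (n : ℕ) : LinearMap.BilinForm ℝ (PQ n) :=
  LinearMap.mk₂ ℝ (omega0 n)
    (fun _ _ _ => by
      simp only [omega0, ← Finset.sum_add_distrib]
      exact Finset.sum_congr rfl fun _ _ => by simp; ring)
    (fun _ _ _ => by
      simp only [omega0, smul_eq_mul, Finset.mul_sum]
      exact Finset.sum_congr rfl fun _ _ => by simp; ring)
    (fun _ _ _ => by
      simp only [omega0, ← Finset.sum_add_distrib]
      exact Finset.sum_congr rfl fun _ _ => by simp; ring)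
    (fun _ _ _ => by
      simp only [omega0, smul_eq_mul, Finset.mul_sum]
      exact Finset.sum_congr rfl fun _ _ => by simp; ring)

@[simp] theorem omega0Form_apply (u v : PQ n) : omega0Form n u v = omega0 n u v := rfl

theorem omega0_swap (u v : PQ n) : omega0 n u v = -omega0 n v u := by
  simp only [omega0, ← Finset.sum_neg_distrib]
  exact Finset.sum_congr rfl fun i _ => by ring

@[simp] theorem omega0_dp (i : Fin n) (v : PQ n) : omega0 n (dp i) v = v.2 i := by
  simp [omega0, dp, Pi.single_apply]

@[simp] theorem omega0_dq (i : Fin n) (v : PQ n) : omega0 n (dq i) v = -v.1 i := by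
  simp [omega0, dq, Pi.single_apply]

theorem omega0Form_separatingLeft : (omega0Form n).SeparatingLeft := fun u hu => by
  refine Prod.ext (funext fun i => ?_) (funext fun i => ?_)
  · simpa [omega0_swap u] using hu (dq i)
  · simpa [omega0_swap u] using hu (dp i)

def omega1Form (n : ℕ) : LinearMap.BilinForm ℝ (XYPQ n) :=
  LinearMap.mk₂ ℝ (omega1 n)
    (fun _ _ _ => by simp [omega1, ← omega0Form_apply]; ring)
    (fun _ _ _ => by simp [omega1, ← omega0Form_apply]; ring)
    (fun _ _ _ => by simp [omega1, ← omega0Form_apply]; ring)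
    (fun _ _ _ => by simp [omega1, ← omega0Form_apply]; ring)

@[simp] theorem omega1Form_apply (u v : XYPQ n) : omega1Form n u v = omega1 n u v := rfl

theorem omega1_swap (u v : XYPQ n) : omega1 n u v = -omega1 n v u := by
  simp only [omega1, omega0_swap u.2.2]
  ring

@[simp] theorem omega1_dx (v : XYPQ n) : omega1 n (1, 0) v = v.2.1 := by
  simp [omega1, omega0]

@[simp] theorem omega1_dy (v : XYPQ n) : omega1 n (0, 1, 0) v = -v.1 := by
  simp [omega1, omega0]

theorem omega1Form_separatingLeft : (omega1Form n).SeparatingLeft := fun u hu => by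
  have hpq : u.2.2 = 0 := omega0Form_separatingLeft _ fun v => by
    simpa [omega1, omega0] using hu (0, 0, v)
  refine Prod.ext ?_ (Prod.ext ?_ hpq)
  · simpa [omega1_swap u] using hu (0, 1, 0)
  · simpa [omega1_swap u] using hu (1, 0)

end SymplecticForms

section Reduction

variable {n : ℕ} {Ψ : XYPQ n → XYPQ n}

theorem mem_ball_zero_xypq {ρ : ℝ} {z : XYPQ n} :
    z ∈ Metric.ball 0 ρ ↔ |z.1| < ρ ∧ |z.2.1| < ρ ∧ ‖z.2.2‖ < ρ := by
  rw [mem_ball_zero_iff, Prod.norm_def, Prod.norm_def, Real.norm_eq_abs, Real.norm_eq_abs,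
    max_lt_iff, max_lt_iff]

theorem eventually_fst_eq (hΨ : ∀ᶠ z in 𝓝 0, PreservesFormAt (omega1Form n) Ψ z)
    (hy : ∀ᶠ z in 𝓝 0, (Ψ z).2.1 = z.2.1) {G G' : YPQ n → ℝ}
    (hconj : ∀ᶠ z in 𝓝 0, (Ψ z).1 ^ 2 + G' (Ψ z).2 = z.1 ^ 2 + G z.2) :
    ∀ᶠ z in 𝓝 0, (Ψ z).1 = z.1 := by
  obtain ⟨ρ, hρ, hball⟩ := Metric.eventually_nhds_iff_ball.mp (hΨ.and (hy.and hconj))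
  have hs : IsOpen (Metric.ball (0 : XYPQ n) ρ) := Metric.isOpen_ball
  have h0 : ∀ z ∈ Metric.ball (0 : XYPQ n) ρ, ((0 : ℝ), z.2) ∈ Metric.ball 0 ρ := fun z hz =>
    mem_ball_zero_xypq.2 ⟨by simpa using hρ, (mem_ball_zero_xypq.1 hz).2⟩
  have hshift : ∀ z ∈ Metric.ball 0 ρ, Ψ z - z = Ψ (0, z.2) - (0, z.2) := fun z hz => by
    refine sub_eq_sub_of_fderiv_apply_eq hs (convex_ball 0 ρ) (fun w hw => (hball w hw).1.1)
      (h0 z hz) hz fun w hw => ?_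
    have hdx : fderiv ℝ Ψ w (1, 0) = (1, 0) :=
      (hball w hw).1.fderiv_apply_eq_self omega1Form_separatingLeft
        (eventually_of_mem (hs.mem_nhds hw) fun v hv => by simp [(hball v hv).2.1])
    rw [show z - (0, z.2) = z.1 • ((1, 0) : XYPQ n) by ext <;> simp, map_smul, hdx]
  -- for `A = (Ψ (0, w)).1` and `t = ρ / 2` the conjugation equations give `(A + t)² = A² + t²`
  have hx0 : ∀ w : YPQ n, ((0 : ℝ), w) ∈ Metric.ball 0 ρ → (Ψ (0, w)).1 = 0 := fun w hw => by
    have ht : (ρ / 2, w) ∈ Metric.ball 0 ρ := mem_ball_zero_xypq.2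
      ⟨by rw [abs_of_pos (half_pos hρ)]; exact half_lt_self hρ, (mem_ball_zero_xypq.1 hw).2⟩
    have hsh := hshift _ ht
    have h1 : (Ψ (ρ / 2, w)).1 = (Ψ (0, w)).1 + ρ / 2 := by
      have := congrArg Prod.fst hsh
      simp only [Prod.fst_sub, sub_zero] at this
      linarith
    have h2 : (Ψ (ρ / 2, w)).2 = (Ψ (0, w)).2 := by simpa using congrArg Prod.snd hsh
    have hc := (hball _ ht).2.2
    have hc0 := (hball _ hw).2.2
    rw [h1, h2] at hc
    simp only at hc hc0
    nlinarith
  filter_upwards [hs.mem_nhds (Metric.mem_ball_self hρ)] with z hz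
  have := congrArg Prod.fst (hshift z hz)
  simp only [Prod.fst_sub, hx0 _ (h0 z hz), sub_zero] at this
  linarith

theorem eventually_eq_fiberwise (hΨ : ∀ᶠ z in 𝓝 0, PreservesFormAt (omega1Form n) Ψ z)
    (hx : ∀ᶠ z in 𝓝 0, (Ψ z).1 = z.1) (hy : ∀ᶠ z in 𝓝 0, (Ψ z).2.1 = z.2.1) :
    ∀ᶠ z in 𝓝 0, Ψ z = (z.1, z.2.1, (Ψ (0, 0, z.2.2)).2.2) := by
  obtain ⟨ρ, hρ, hball⟩ := Metric.eventually_nhds_iff_ball.mp (hΨ.and (hx.and hy))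
  have hs : IsOpen (Metric.ball (0 : XYPQ n) ρ) := Metric.isOpen_ball
  have hfix : ∀ w ∈ Metric.ball 0 ρ, ∀ v : XYPQ n, v.2.2 = 0 → fderiv ℝ Ψ w v = v := by
    intro w hw v hv
    have hfix' := fun ξ hξ => (hball w hw).1.fderiv_apply_eq_self omega1Form_separatingLeft
      (ξ := ξ) (eventually_of_mem (hs.mem_nhds hw) hξ)
    have hdx : fderiv ℝ Ψ w (1, 0) = (1, 0) := hfix' _ fun u hu => by simp [(hball u hu).2.2]
    have hdy : fderiv ℝ Ψ w (0, 1, 0) = (0, 1, 0) := hfix' _ fun u hu => by simp [(hball u hu).2.1]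
    rw [show v = v.1 • ((1, 0) : XYPQ n) + v.2.1 • ((0, 1, 0) : XYPQ n) by ext <;> simp [hv],
      map_add, map_smul, map_smul, hdx, hdy]
  filter_upwards [hs.mem_nhds (Metric.mem_ball_self hρ)] with z hz
  have h0 : ((0 : ℝ), (0 : ℝ), z.2.2) ∈ Metric.ball 0 ρ := by
    have := mem_ball_zero_xypq.1 hz
    exact mem_ball_zero_xypq.2 ⟨by simpa using hρ, by simpa using hρ, this.2.2⟩
  have hsh := sub_eq_sub_of_fderiv_apply_eq hs (convex_ball 0 ρ) (fun w hw => (hball w hw).1.1)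
    h0 hz fun w hw => hfix w hw _ (by simp)
  obtain ⟨-, hx0, hy0⟩ := hball _ h0
  refine Prod.ext (hball z hz).2.1 (Prod.ext (hball z hz).2.2 ?_)
  simpa [hx0, hy0] using congrArg (fun v => v.2.2) hsh

theorem omega1_inr_inr (u v : PQ n) :
    omega1 n ((0 : ℝ), (0 : ℝ), u) ((0 : ℝ), (0 : ℝ), v) = omega0 n u v := by
  simp [omega1]

theorem PreservesFormAt.of_eq_fiberwise {Φ : PQ n → PQ n} {pq : PQ n}
    (hΨ : PreservesFormAt (omega1Form n) Ψ (0, 0, pq))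
    (heq : ∀ᶠ z in 𝓝 ((0, 0, pq) : XYPQ n), Ψ z = (z.1, z.2.1, Φ z.2.2)) :
    PreservesFormAt (omega0Form n) Φ pq := by
  let ι : PQ n →L[ℝ] XYPQ n :=
    (ContinuousLinearMap.inr ℝ ℝ (YPQ n)).comp (ContinuousLinearMap.inr ℝ ℝ (PQ n))
  let π : XYPQ n →L[ℝ] PQ n :=
    (ContinuousLinearMap.snd ℝ ℝ (PQ n)).comp (ContinuousLinearMap.snd ℝ ℝ (YPQ n))
  have hι : ∀ u, ι u = (0, 0, u) := fun _ => rfl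
  have hΦ : HasFDerivAt Φ (π.comp ((fderiv ℝ Ψ (0, 0, pq)).comp ι)) pq := by
    refine (π.hasFDerivAt.comp pq (hΨ.1.hasFDerivAt.comp pq ι.hasFDerivAt)).congr_of_eventuallyEq ?_
    filter_upwards [ι.continuous.continuousAt.eventually heq] with u hu
    simp only [π, ContinuousLinearMap.coe_comp, Function.comp_apply, hι] at hu ⊢
    simp [hu]
  have hDΨ : ∀ u, fderiv ℝ Ψ (0, 0, pq) (0, 0, u) = (0, 0, fderiv ℝ Φ pq u) := fun u => by
    have hx := fderiv_apply_eq_of_eventually_eq (ContinuousLinearMap.fst ℝ ℝ (YPQ n)) hΨ.1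
      (heq.mono fun z hz => by simp [hz]) (0, 0, u)
    have hy := fderiv_apply_eq_of_eventually_eq
      ((ContinuousLinearMap.fst ℝ ℝ (PQ n)).comp (ContinuousLinearMap.snd ℝ ℝ (YPQ n))) hΨ.1
      (heq.mono fun z hz => by simp [hz]) (0, 0, u)
    simp only [ContinuousLinearMap.coe_fst', ContinuousLinearMap.coe_comp, Function.comp_apply,
      ContinuousLinearMap.coe_snd'] at hx hy
    rw [hΦ.fderiv]
    exact Prod.ext hx (Prod.ext hy rfl)
  refine ⟨hΦ.differentiableAt, fun u v => ?_⟩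
  have := hΨ.2 (0, 0, u) (0, 0, v)
  simpa [hDΨ, omega1_inr_inr] using this

theorem exists_fiber_map (hΨ : IsLocalSymp1 n Ψ) (hy : ∀ᶠ z in 𝓝 0, (Ψ z).2.1 = z.2.1)
    {G G' : YPQ n → ℝ} (hconj : ∀ᶠ z in 𝓝 0, (Ψ z).1 ^ 2 + G' (Ψ z).2 = z.1 ^ 2 + G z.2) :
    ∃ Φ : PQ n → PQ n, Φ 0 = 0 ∧ (∀ᶠ pq in 𝓝 0, PreservesFormAt (omega0Form n) Φ pq) ∧
      ∀ᶠ w in 𝓝 0, G w = G' (w.1, Φ w.2) := by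
  have hP : ∀ᶠ z in 𝓝 0, PreservesFormAt (omega1Form n) Ψ z :=
    hΨ.2.1.eventually_differentiableAt.and hΨ.2.2.2
  have hF := eventually_eq_fiberwise hP (eventually_fst_eq hP hy hconj) hy
  have hι : Tendsto (fun pq : PQ n => ((0 : ℝ), (0 : ℝ), pq)) (𝓝 0) (𝓝 0) :=
    (continuous_const.prodMk (continuous_const.prodMk continuous_id)).tendsto' _ _ rfl
  have hι' : Tendsto (fun w : YPQ n => ((0 : ℝ), w)) (𝓝 0) (𝓝 0) :=
    (continuous_const.prodMk continuous_id).tendsto' _ _ rfl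
  refine ⟨fun pq => (Ψ (0, 0, pq)).2.2, congrArg (fun z => z.2.2) hΨ.1, ?_, ?_⟩
  · filter_upwards [hι.eventually hP, hι.eventually (eventually_eventually_nhds.mpr hF)]
      with pq h1 h2 using h1.of_eq_fiberwise h2
  · filter_upwards [hι'.eventually (hconj.and hF)] with w ⟨hc, hf⟩
    rw [hf] at hc
    simpa using hc.symm

end Reduction

section Coefficients

theorem eq_zero_of_add_mul_eq_zero {s : Set ℝ} (hs : s ∈ 𝓝 0) {c : ℝ} {χ : ℝ → ℝ}
    (hχ : ContinuousAt χ 0) (h : ∀ y ∈ s, c + y * χ y = 0) : c = 0 ∧ ∀ y ∈ s, χ y = 0 := by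
  have hc : c = 0 := by simpa using h 0 (mem_of_mem_nhds hs)
  have hne : ∀ y ∈ s, y ≠ 0 → χ y = 0 := fun y hy hy0 =>
    (mul_eq_zero.mp (by simpa [hc] using h y hy)).resolve_left hy0
  refine ⟨hc, fun y hy => ?_⟩
  rcases eq_or_ne y 0 with rfl | hy0
  · have hev : χ =ᶠ[𝓝[≠] 0] fun _ => 0 := by
      filter_upwards [nhdsWithin_le_nhds hs, self_mem_nhdsWithin] with y hy hy0 using hne y hy hy0
    exact tendsto_nhds_unique (hχ.tendsto.mono_left nhdsWithin_le_nhds)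
      (tendsto_const_nhds.congr' hev.symm)
  · exact hne y hy hy0

theorem eq_zero_of_sum_add_mul_pow_eq_zero {s : Set ℝ} (hs : s ∈ 𝓝 0) :
    ∀ {N : ℕ} {e f : Fin N → ℝ} {ψ : ℝ → ℝ}, ContinuousAt ψ 0 →
      (∀ y ∈ s, ∑ i, (e i * y ^ (2 * i.1) + f i * y ^ (2 * i.1 + 1)) + ψ y * y ^ (2 * N) = 0) →
      (∀ i, e i = 0 ∧ f i = 0) ∧ ∀ y ∈ s, ψ y = 0
  | 0, _, _, _, _, h => ⟨finZeroElim, fun y hy => by simpa using h y hy⟩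
  | N + 1, e, f, ψ, hψ, h => by
    obtain ⟨hef, hlast⟩ := eq_zero_of_sum_add_mul_pow_eq_zero hs
      (e := fun i => e i.castSucc) (f := fun i => f i.castSucc)
      (ψ := fun y => e (Fin.last N) + y * (f (Fin.last N) + y * ψ y))
      (by fun_prop) fun y hy => by
        have := h y hy
        rw [Fin.sum_univ_castSucc] at this
        simp only [Fin.val_castSucc, Fin.val_last] at this ⊢
        linear_combination this
    obtain ⟨he, hrest⟩ := eq_zero_of_add_mul_eq_zero hs (by fun_prop) hlast
    obtain ⟨hf, hψ0⟩ := eq_zero_of_add_mul_eq_zero hs hψ hrest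
    exact ⟨Fin.lastCases ⟨he, hf⟩ hef, hψ0⟩

variable {n : ℕ}

def normalForm (n : ℕ) (r : ℝ → ℝ) (φ : YPQ n → ℝ) (P Q : Fin n → PQ n → ℝ) (w : YPQ n) : ℝ :=
  r w.1 + ∑ i : Fin n, ((w.2.1 i + P i w.2) * w.1 ^ (2 * i.1) + Q i w.2 * w.1 ^ (2 * i.1 + 1))
    + φ w * w.1 ^ (2 * n)

theorem normalForm_sub_normalForm (r r' : ℝ → ℝ) (φ φ' : YPQ n → ℝ) (P Q P' Q' : Fin n → PQ n → ℝ)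
    (y : ℝ) (z z' : PQ n) :
    normalForm n r φ P Q (y, z) - normalForm n r' φ' P' Q' (y, z') = r y - r' y
      + ∑ i : Fin n, ((z.1 i + P i z - (z'.1 i + P' i z')) * y ^ (2 * i.1)
        + (Q i z - Q' i z') * y ^ (2 * i.1 + 1))
      + (φ (y, z) - φ' (y, z')) * y ^ (2 * n) := by
  have hsum : ∑ i : Fin n, ((z.1 i + P i z - (z'.1 i + P' i z')) * y ^ (2 * i.1)
        + (Q i z - Q' i z') * y ^ (2 * i.1 + 1))
      = ∑ i : Fin n, ((z.1 i + P i z) * y ^ (2 * i.1) + Q i z * y ^ (2 * i.1 + 1))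
        - ∑ i : Fin n, ((z'.1 i + P' i z') * y ^ (2 * i.1) + Q' i z' * y ^ (2 * i.1 + 1)) := by
    rw [← Finset.sum_sub_distrib]
    exact Finset.sum_congr rfl fun i _ => by ring
  rw [hsum, normalForm, normalForm]
  ring

theorem normalForm_apply_zero (r : ℝ → ℝ) (φ : YPQ n → ℝ) {P Q : Fin n → PQ n → ℝ}
    (hP : ∀ i, P i 0 = 0) (hQ : ∀ i, Q i 0 = 0) (y : ℝ) :
    normalForm n r φ P Q (y, 0) = r y + φ (y, 0) * y ^ (2 * n) := by
  simp [normalForm, hP, hQ]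

variable {r r' : ℝ → ℝ} {φ φ' : YPQ n → ℝ} {P Q P' Q' : Fin n → PQ n → ℝ} {Φ : PQ n → PQ n}

theorem eventually_eq_of_normalForm_eq (hφ0 : ∀ᶠ y in 𝓝 0, φ (y, 0) = 0)
    (hφ0' : ∀ᶠ y in 𝓝 0, φ' (y, 0) = 0) (hP : ∀ i, P i 0 = 0) (hQ : ∀ i, Q i 0 = 0)
    (hP' : ∀ i, P' i 0 = 0) (hQ' : ∀ i, Q' i 0 = 0) (hΦ0 : Φ 0 = 0)
    (h : ∀ᶠ w in 𝓝 0, normalForm n r φ P Q w = normalForm n r' φ' P' Q' (w.1, Φ w.2)) :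
    ∀ᶠ y in 𝓝 0, r y = r' y := by
  have hslice : Tendsto (fun y : ℝ => ((y, 0) : YPQ n)) (𝓝 0) (𝓝 0) :=
    (continuous_id.prodMk continuous_const).tendsto' _ _ rfl
  filter_upwards [hslice.eventually h, hφ0, hφ0'] with y hy h1 h2
  simpa [hΦ0, normalForm_apply_zero _ _ hP hQ, normalForm_apply_zero _ _ hP' hQ', h1, h2] using hy

theorem normalForm_coeffs_eq (hΦ : Tendsto Φ (𝓝 0) (𝓝 0)) (hφ : ∀ᶠ w in 𝓝 0, ContinuousAt φ w)
    (hφ' : ∀ᶠ w in 𝓝 0, ContinuousAt φ' w) (hr : ∀ᶠ y in 𝓝 0, r y = r' y)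
    (h : ∀ᶠ w in 𝓝 0, normalForm n r φ P Q w = normalForm n r' φ' P' Q' (w.1, Φ w.2)) :
    (∀ᶠ z in 𝓝 0, ∀ i, (Φ z).1 i + P' i (Φ z) = z.1 i + P i z) ∧
      (∀ᶠ z in 𝓝 0, ∀ i, Q i z = Q' i (Φ z)) ∧ ∀ᶠ w in 𝓝 0, φ w = φ' (w.1, Φ w.2) := by
  rw [show (0 : YPQ n) = (0, 0) from rfl, nhds_prod_eq] at h
  obtain ⟨pa, hpa, pb, hpb, hab⟩ := eventually_prod_iff.mp h
  have hcont : ∀ᶠ z in 𝓝 0, ContinuousAt (fun y => φ (y, z) - φ' (y, Φ z)) 0 := by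
    have h0 : Tendsto (fun z : PQ n => ((0 : ℝ), z)) (𝓝 0) (𝓝 0) :=
      (continuous_const.prodMk continuous_id).tendsto' _ _ rfl
    filter_upwards [h0.eventually hφ, (h0.comp hΦ).eventually hφ'] with z h1 h2
    exact (h1.comp (f := fun y : ℝ => (y, z)) (by fun_prop)).sub
      (h2.comp (f := fun y : ℝ => (y, Φ z)) (by fun_prop))
  have key : ∀ᶠ z in 𝓝 0,
      (∀ i, z.1 i + P i z - ((Φ z).1 i + P' i (Φ z)) = 0 ∧ Q i z - Q' i (Φ z) = 0) ∧
        ∀ y ∈ {y | pa y ∧ r y = r' y}, φ (y, z) - φ' (y, Φ z) = 0 := by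
    filter_upwards [hpb, hcont] with z hz hc
    refine eq_zero_of_sum_add_mul_pow_eq_zero (hpa.and hr) hc fun y ⟨hy, hry⟩ => ?_
    have := normalForm_sub_normalForm r r' φ φ' P Q P' Q' y z (Φ z)
    rw [hab hy hz, sub_self, hry, sub_self, zero_add] at this
    exact this.symm
  refine ⟨key.mono fun z hz i => (sub_eq_zero.mp (hz.1 i).1).symm,
    key.mono fun z hz i => sub_eq_zero.mp (hz.1 i).2, ?_⟩
  rw [show (0 : YPQ n) = (0, 0) from rfl, nhds_prod_eq]
  exact ((hpa.and hr).prod_mk key).mono fun w hw => sub_eq_zero.mp (hw.2.2 _ hw.1)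

end Coefficients

section Generators

variable {n : ℕ}

def genCLM (n j : ℕ) : PQ n →L[ℝ] ℝ :=
  LinearMap.toContinuousLinearMap
    { toFun := genFun n j
      map_add' := fun u v => by unfold genFun; split_ifs <;> simp
      map_smul' := fun c u => by unfold genFun; split_ifs <;> simp }

@[simp] theorem genCLM_apply (j : ℕ) (z : PQ n) : genCLM n j z = genFun n j z := rfl

theorem genFun_two_mul (i : Fin n) (z : PQ n) : genFun n (2 * i.1) z = z.2 i := by
  simp [genFun, i.isLt]

theorem genFun_eq_zero_of {m : ℕ} {z : PQ n} (hp : ∀ i : Fin n, 2 * i.1 + 1 < m → z.1 i = 0)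
    (hq : ∀ i : Fin n, 2 * i.1 < m → z.2 i = 0) {j : ℕ} (hj : j < m) : genFun n j z = 0 := by
  unfold genFun
  split_ifs with h1 h2
  · exact hq _ (by simp only; omega)
  · exact hp _ (by simp only; omega)
  · rfl

theorem sum_mul_genFun_eq_last {m : ℕ} {z : PQ n} (hz : ∀ j < m, genFun n j z = 0)
    (a : Fin (m + 1) → ℝ) :
    ∑ j : Fin (m + 1), a j * genFun n j z = a (Fin.last m) * genFun n m z := by
  simp [Fin.sum_univ_castSucc, hz]

namespace InIdeal

variable {m : ℕ} {f : PQ n → ℝ}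

theorem eventually_eq_zero (hf : InIdeal n m f) :
    ∀ᶠ z in 𝓝 0, (∀ j < m, genFun n j z = 0) → f z = 0 := by
  obtain ⟨c, -, hrep⟩ := hf
  filter_upwards [hrep] with z hz h0
  simp [hz, h0]

theorem apply_zero (hf : InIdeal n m f) : f 0 = 0 :=
  hf.eventually_eq_zero.self_of_nhds fun j _ => by simp [genFun]

/-- On the common zero set of the first `m` generators, `f` is a multiple `c · genFun n m` with
`c 0 ≠ 0`, read off from the derivative of `f` in the direction `e`. -/
theorem eventually_genFun_eq_zero (hf : InIdeal n (m + 1) f) {e : PQ n}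
    (he : ∀ j < m, genFun n j e = 0) (hfe : fderiv ℝ f 0 e ≠ 0) :
    ∀ᶠ z in 𝓝 0, (∀ j < m, genFun n j z = 0) → f z = 0 → genFun n m z = 0 := by
  obtain ⟨c, hc, hrep⟩ := hf
  have hD : HasFDerivAt f (∑ j, c j 0 • genCLM n j) 0 := by
    refine (HasFDerivAt.fun_sum fun j _ => ?_).congr_of_eventuallyEq hrep
    have h := ((hc j).eventually_differentiableAt.self_of_nhds.hasFDerivAt).mul
      (genCLM n j).hasFDerivAt
    rwa [map_zero, zero_smul, add_zero] at h
  have hc0 : c (Fin.last m) 0 ≠ 0 := by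
    rw [hD.fderiv] at hfe
    simp only [sum_apply, smul_apply, genCLM_apply,
      smul_eq_mul, sum_mul_genFun_eq_last he] at hfe
    exact left_ne_zero_of_mul hfe
  filter_upwards [hrep, (hc _).eventually_continuousAt.self_of_nhds.eventually_ne hc0]
    with z hz hcz h0 hf0
  rw [hz, sum_mul_genFun_eq_last h0] at hf0
  exact (mul_eq_zero.mp hf0).resolve_left hcz

end InIdeal

end Generators

section FiberMap

variable {n : ℕ}

theorem sum_smul_dp_add_smul_dq (v : PQ n) : ∑ i, (v.1 i • dp i + v.2 i • dq i) = v := by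
  ext i <;> simp [dp, dq, Prod.fst_sum, Prod.snd_sum, Finset.sum_apply, Pi.single_apply]

theorem PQ.apply_eq_self (A : PQ n →ₗ[ℝ] PQ n) {v : PQ n}
    (hp : ∀ i, v.1 i ≠ 0 → A (dp i) = dp i) (hq : ∀ i, v.2 i ≠ 0 → A (dq i) = dq i) :
    A v = v := by
  conv_lhs => rw [← sum_smul_dp_add_smul_dq v]
  conv_rhs => rw [← sum_smul_dp_add_smul_dq v]
  simp only [map_sum, map_add, map_smul]
  refine Finset.sum_congr rfl fun i _ => congrArg₂ (· + ·) ?_ ?_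
  · by_cases h : v.1 i = 0
    · simp [h]
    · rw [hp i h]
  · by_cases h : v.2 i = 0
    · simp [h]
    · rw [hq i h]

def zeroGens (m : ℕ) (w : PQ n) : PQ n :=
  (fun i => if 2 * i.1 + 1 < m then 0 else w.1 i, fun i => if 2 * i.1 < m then 0 else w.2 i)

theorem genFun_zeroGens {m j : ℕ} (w : PQ n) (hj : j < m) : genFun n j (zeroGens m w) = 0 :=
  genFun_eq_zero_of (fun _ hi => if_pos hi) (fun _ hi => if_pos hi) hj

theorem norm_zeroGens_le (m : ℕ) (w : PQ n) : ‖zeroGens m w‖ ≤ ‖w‖ := by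
  refine max_le_max ((pi_norm_le_iff_of_nonneg (norm_nonneg _)).2 fun i => ?_)
    ((pi_norm_le_iff_of_nonneg (norm_nonneg _)).2 fun i => ?_)
  · simp only [zeroGens]; split_ifs
    · simp
    · exact norm_le_pi_norm w.1 i
  · simp only [zeroGens]; split_ifs
    · simp
    · exact norm_le_pi_norm w.2 i

theorem tendsto_zeroGens (m : ℕ) : Tendsto (zeroGens (n := n) m) (𝓝 0) (𝓝 0) :=
  tendsto_zero_iff_norm_tendsto_zero.2
    (squeeze_zero (fun _ => norm_nonneg _) (norm_zeroGens_le m) tendsto_norm_zero)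

variable {Φ : PQ n → PQ n}

theorem eventually_sub_eq_sub_zeroGens (hΦ : ∀ᶠ z in 𝓝 0, PreservesFormAt (omega0Form n) Φ z)
    {m : ℕ} (hp : ∀ᶠ z in 𝓝 0, ∀ i : Fin n, 2 * i.1 < m → (Φ z).1 i = z.1 i)
    (hq : ∀ᶠ z in 𝓝 0, ∀ i : Fin n, 2 * i.1 + 1 < m → (Φ z).2 i = z.2 i) :
    ∀ᶠ w in 𝓝 0, Φ w - w = Φ (zeroGens m w) - zeroGens m w := by
  obtain ⟨δ, hδ, hball⟩ := Metric.eventually_nhds_iff_ball.mp (hΦ.and (hp.and hq))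
  have hs : IsOpen (Metric.ball (0 : PQ n) δ) := Metric.isOpen_ball
  have hfix : ∀ z ∈ Metric.ball 0 δ, ∀ ξ : PQ n,
      (∀ w ∈ Metric.ball 0 δ, omega0 n ξ (Φ w) = omega0 n ξ w) → fderiv ℝ Φ z ξ = ξ :=
    fun z hz ξ hξ => (hball z hz).1.fderiv_apply_eq_self omega0Form_separatingLeft
      (eventually_of_mem (hs.mem_nhds hz) hξ)
  filter_upwards [Metric.ball_mem_nhds 0 hδ] with w hw
  have hu : zeroGens m w ∈ Metric.ball 0 δ :=
    mem_ball_zero_iff.2 ((norm_zeroGens_le m w).trans_lt (mem_ball_zero_iff.1 hw))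
  -- preserving `pᵢ` (resp. `qᵢ`) makes `DΦ` fix `∂_{qᵢ}` (resp. `∂_{pᵢ}`), the directions that
  -- `zeroGens m` moves along
  refine sub_eq_sub_of_fderiv_apply_eq hs (convex_ball 0 δ) (fun z hz => (hball z hz).1.1) hu hw
    fun z hz => PQ.apply_eq_self (fderiv ℝ Φ z : PQ n →ₗ[ℝ] PQ n) (fun i hi => ?_) (fun i hi => ?_)
  · have him : 2 * i.1 + 1 < m := by by_contra h; simp [zeroGens, h] at hi
    exact hfix z hz _ fun w hw => by simp [(hball w hw).2.2 i him]
  · have him : 2 * i.1 < m := by by_contra h; simp [zeroGens, h] at hi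
    exact hfix z hz _ fun w hw => by simp [(hball w hw).2.1 i him]

theorem eventually_fst_eq_of_inIdeal (hΦ : ∀ᶠ z in 𝓝 0, PreservesFormAt (omega0Form n) Φ z)
    (hΦt : Tendsto Φ (𝓝 0) (𝓝 0)) (k : Fin n)
    (hlt : ∀ᶠ z in 𝓝 0, ∀ i : Fin n, i.1 < k.1 → (Φ z).1 i = z.1 i ∧ (Φ z).2 i = z.2 i)
    {P P' : PQ n → ℝ} (hP : InIdeal n (2 * k.1) P)
    (hP' : InIdeal n (2 * k.1) P') (hA : ∀ᶠ z in 𝓝 0, (Φ z).1 k + P' (Φ z) = z.1 k + P z) :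
    ∀ᶠ z in 𝓝 0, (Φ z).1 k = z.1 k := by
  have htr := eventually_sub_eq_sub_zeroGens hΦ (m := 2 * k.1)
    (hlt.mono fun z h i hi => (h i (by omega)).1) (hlt.mono fun z h i hi => (h i (by omega)).2)
  filter_upwards [htr, (tendsto_zeroGens (2 * k.1)).eventually (hlt.and (hP.eventually_eq_zero.and
    ((hΦt.eventually hP'.eventually_eq_zero).and hA)))] with w hw ⟨hlu, hPu, hP'u, hAu⟩
  set u := zeroGens (2 * k.1) w
  have hu : ∀ j < 2 * k.1, genFun n j u = 0 := fun j hj => genFun_zeroGens w hj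
  have hΦu : ∀ j < 2 * k.1, genFun n j (Φ u) = 0 := fun j => genFun_eq_zero_of
    (fun i hi => by rw [(hlu i (by omega)).1]; exact if_pos hi)
    (fun i hi => by rw [(hlu i (by omega)).2]; exact if_pos hi)
  have huk : u.1 k = w.1 k := if_neg (by omega)
  rw [hPu hu, hP'u hΦu, huk] at hAu
  have := congrArg (fun v => v.1 k) hw
  simp only [Prod.fst_sub, Pi.sub_apply, huk] at this
  linarith

theorem eventually_snd_eq_of_inIdeal (hΦ : ∀ᶠ z in 𝓝 0, PreservesFormAt (omega0Form n) Φ z)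
    (hΦt : Tendsto Φ (𝓝 0) (𝓝 0)) (k : Fin n)
    (hlt : ∀ᶠ z in 𝓝 0, ∀ i : Fin n, i.1 < k.1 → (Φ z).1 i = z.1 i ∧ (Φ z).2 i = z.2 i)
    (hfst : ∀ᶠ z in 𝓝 0, (Φ z).1 k = z.1 k) {Q Q' : PQ n → ℝ}
    (hQ : InIdeal n (2 * k.1 + 1) Q) (hQ' : InIdeal n (2 * k.1 + 1) Q')
    (hQd' : fderiv ℝ Q' 0 (dq k) ≠ 0) (hB : ∀ᶠ z in 𝓝 0, Q z = Q' (Φ z)) :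
    ∀ᶠ z in 𝓝 0, (Φ z).2 k = z.2 k := by
  have hdq : ∀ j < 2 * k.1, genFun n j (dq k) = 0 := fun j => genFun_eq_zero_of
    (fun _ _ => rfl) fun i hi => by simp only [dq, Pi.single_apply, Fin.ext_iff]; grind
  have htr := eventually_sub_eq_sub_zeroGens hΦ (m := 2 * k.1 + 1)
    ((hlt.and hfst).mono fun z h i hi => by
      rcases Nat.lt_or_ge i.1 k.1 with hik | hik
      · exact (h.1 i hik).1
      · obtain rfl : i = k := Fin.ext (by omega)
        exact h.2)
    (hlt.mono fun z h i hi => (h i (by omega)).2)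
  filter_upwards [htr, (tendsto_zeroGens (2 * k.1 + 1)).eventually
    (hlt.and (hQ.eventually_eq_zero.and
      ((hΦt.eventually (hQ'.eventually_genFun_eq_zero hdq hQd')).and hB)))]
    with w hw ⟨hlu, hQu, hQ'u, hBu⟩
  set u := zeroGens (2 * k.1 + 1) w
  have hΦu : ∀ j < 2 * k.1, genFun n j (Φ u) = 0 := fun j => genFun_eq_zero_of
    (fun i hi => by rw [(hlu i (by omega)).1]; exact if_pos (by omega))
    (fun i hi => by rw [(hlu i (by omega)).2]; exact if_pos (by omega))
  have hΦuk : (Φ u).2 k = 0 := by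
    rw [← genFun_two_mul]
    exact hQ'u hΦu (by rw [← hBu, hQu fun j hj => genFun_zeroGens w hj])
  have huk : u.2 k = 0 := if_pos (by omega)
  have := congrArg (fun v => v.2 k) hw
  simp only [Prod.snd_sub, Pi.sub_apply, huk, hΦuk] at this
  linarith

theorem eventually_eq_self_of_inIdeal (hΦ : ∀ᶠ z in 𝓝 0, PreservesFormAt (omega0Form n) Φ z)
    (hΦt : Tendsto Φ (𝓝 0) (𝓝 0)) {P Q P' Q' : Fin n → PQ n → ℝ}
    (hP : ∀ i : Fin n, InIdeal n (2 * i.1) (P i)) (hQ : ∀ i : Fin n, InIdeal n (2 * i.1 + 1) (Q i))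
    (hP' : ∀ i : Fin n, InIdeal n (2 * i.1) (P' i))
    (hQ' : ∀ i : Fin n, InIdeal n (2 * i.1 + 1) (Q' i))
    (hQd' : ∀ i : Fin n, fderiv ℝ (Q' i) 0 (dq i) ≠ 0)
    (hA : ∀ᶠ z in 𝓝 0, ∀ i, (Φ z).1 i + P' i (Φ z) = z.1 i + P i z)
    (hB : ∀ᶠ z in 𝓝 0, ∀ i, Q i z = Q' i (Φ z)) :
    ∀ᶠ z in 𝓝 0, Φ z = z := by
  suffices h : ∀ k ≤ n, ∀ᶠ z in 𝓝 0, ∀ i : Fin n, i.1 < k → (Φ z).1 i = z.1 i ∧ (Φ z).2 i = z.2 i by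
    filter_upwards [h n le_rfl] with z hz
    exact Prod.ext (funext fun i => (hz i i.isLt).1) (funext fun i => (hz i i.isLt).2)
  intro k hk
  induction k with
  | zero => exact .of_forall fun _ i hi => absurd hi (Nat.not_lt_zero _)
  | succ k ih =>
    let K : Fin n := ⟨k, hk⟩
    have hlt := ih (by omega)
    have hfst := eventually_fst_eq_of_inIdeal hΦ hΦt K hlt (hP K) (hP' K) (hA.mono fun _ h => h K)
    have hsnd := eventually_snd_eq_of_inIdeal hΦ hΦt K hlt hfst (hQ K) (hQ' K) (hQd' K)
      (hB.mono fun _ h => h K)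
    filter_upwards [hlt, hfst, hsnd] with z h1 h2 h3 i hi
    rcases Nat.lt_succ_iff_lt_or_eq.mp hi with hi | hi
    · exact h1 i hi
    · obtain rfl : i = K := Fin.ext hi
      exact ⟨h2, h3⟩

end FiberMap

theorem constrained_hamiltonian_invariants_general (n : ℕ)
    (r r' : ℝ → ℝ) (φ φ' : YPQ n → ℝ) (Pt Qt Pt' Qt' : Fin n → (PQ n → ℝ))
    (hφsm : SmoothGerm φ) (hφsm' : SmoothGerm φ')
    (hφ0 : ∀ᶠ y in 𝓝 (0 : ℝ), φ (y, 0) = 0)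
    (hφ0' : ∀ᶠ y in 𝓝 (0 : ℝ), φ' (y, 0) = 0)
    (hQd' : ∀ i : Fin n, fderiv ℝ (Qt' i) 0 ((0, Pi.single i 1) : PQ n) ≠ 0)
    (hPI : ∀ i : Fin n, InIdeal n (2 * i.1) (Pt i))
    (hQI : ∀ i : Fin n, InIdeal n (2 * i.1 + 1) (Qt i))
    (hPI' : ∀ i : Fin n, InIdeal n (2 * i.1) (Pt' i))
    (hQI' : ∀ i : Fin n, InIdeal n (2 * i.1 + 1) (Qt' i))
    (g g' : YPQ n → ℝ)
    (hgdef : ∀ w : YPQ n, g w = r w.1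
      + ∑ i : Fin n, ((w.2.1 i + Pt i w.2) * w.1 ^ (2 * i.1)
          + Qt i w.2 * w.1 ^ (2 * i.1 + 1))
      + φ w * w.1 ^ (2 * n))
    (hgdef' : ∀ w : YPQ n, g' w = r' w.1
      + ∑ i : Fin n, ((w.2.1 i + Pt' i w.2) * w.1 ^ (2 * i.1)
          + Qt' i w.2 * w.1 ^ (2 * i.1 + 1))
      + φ' w * w.1 ^ (2 * n))
    (Ψ : XYPQ n → XYPQ n) (hΨ : IsLocalSymp1 n Ψ)
    (hy : ∀ᶠ z in 𝓝 (0 : XYPQ n), (Ψ z).2.1 = z.2.1)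
    (hconj : ∀ᶠ z in 𝓝 (0 : XYPQ n),
      (Ψ z).1 ^ 2 + g' (Ψ z).2 = z.1 ^ 2 + g z.2) :
    (∀ᶠ y in 𝓝 (0 : ℝ), r y = r' y) ∧
      (∀ᶠ w in 𝓝 (0 : YPQ n), φ w = φ' w) ∧
      (∀ i : Fin n, ∀ᶠ w in 𝓝 (0 : PQ n), Pt i w = Pt' i w) ∧
      (∀ i : Fin n, ∀ᶠ w in 𝓝 (0 : PQ n), Qt i w = Qt' i w) := by
  obtain ⟨Φ, hΦ0, hΦ, hgΦ⟩ := exists_fiber_map hΨ hy hconj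
  have hΦt : Tendsto Φ (𝓝 0) (𝓝 0) := by
    simpa [hΦ0] using hΦ.self_of_nhds.1.continuousAt.tendsto
  rw [show g = normalForm n r φ Pt Qt from funext hgdef,
    show g' = normalForm n r' φ' Pt' Qt' from funext hgdef'] at hgΦ
  have hr := eventually_eq_of_normalForm_eq hφ0 hφ0' (fun i => (hPI i).apply_zero)
    (fun i => (hQI i).apply_zero) (fun i => (hPI' i).apply_zero) (fun i => (hQI' i).apply_zero)
    hΦ0 hgΦ
  obtain ⟨hA, hB, hφΦ⟩ := normalForm_coeffs_eq hΦt hφsm.eventually_continuousAt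
    hφsm'.eventually_continuousAt hr hgΦ
  have hid := eventually_eq_self_of_inIdeal hΦ hΦt hPI hQI hPI' hQI' hQd' hA hB
  refine ⟨hr, ?_, fun i => ?_, fun i => ?_⟩
  · filter_upwards [hφΦ, (continuous_snd.tendsto' (0 : YPQ n) 0 rfl).eventually hid] with w h1 h2
    rwa [h2] at h1
  · filter_upwards [hA, hid] with z h1 h2
    simpa [h2] using (h1 i).symm
  · filter_upwards [hB, hid] with z h1 h2
    simpa [h2] using h1 i

/-- the data `r, φ, P̃ᵢ, Q̃ᵢ` of the normal form of Theorem 2 are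
functional invariants: if a local symplectomorphism of `ω₁` preserving `y`
transforms one normal form into another, then the corresponding invariants
coincide as germs at `0`. -/
theorem constrained_hamiltonian_invariants (n : ℕ) (hn : 1 ≤ n)
    (r r' : ℝ → ℝ) (φ φ' : YPQ n → ℝ) (Pt Qt Pt' Qt' : Fin n → (PQ n → ℝ))
    (hrsm : SmoothGerm r) (hrsm' : SmoothGerm r')
    (hφsm : SmoothGerm φ) (hφsm' : SmoothGerm φ')
    (hPsm : ∀ i, SmoothGerm (Pt i)) (hQsm : ∀ i, SmoothGerm (Qt i))
    (hPsm' : ∀ i, SmoothGerm (Pt' i)) (hQsm' : ∀ i, SmoothGerm (Qt' i))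
    (hr0 : r 0 = 0) (hr0' : r' 0 = 0)
    (hrd : deriv r 0 ≠ 0) (hrd' : deriv r' 0 ≠ 0)
    (hφ0 : ∀ᶠ y in 𝓝 (0 : ℝ), φ (y, 0) = 0)
    (hφ0' : ∀ᶠ y in 𝓝 (0 : ℝ), φ' (y, 0) = 0)
    (hPt0 : Pt ⟨0, hn⟩ = 0) (hPt0' : Pt' ⟨0, hn⟩ = 0)
    (hQd : ∀ i : Fin n, fderiv ℝ (Qt i) 0 ((0, Pi.single i 1) : PQ n) ≠ 0)
    (hQd' : ∀ i : Fin n, fderiv ℝ (Qt' i) 0 ((0, Pi.single i 1) : PQ n) ≠ 0)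
    (hPI : ∀ i : Fin n, InIdeal n (2 * i.1) (Pt i))
    (hQI : ∀ i : Fin n, InIdeal n (2 * i.1 + 1) (Qt i))
    (hPI' : ∀ i : Fin n, InIdeal n (2 * i.1) (Pt' i))
    (hQI' : ∀ i : Fin n, InIdeal n (2 * i.1 + 1) (Qt' i))
    (g g' : YPQ n → ℝ)
    (hgdef : ∀ w : YPQ n, g w = r w.1
      + ∑ i : Fin n, ((w.2.1 i + Pt i w.2) * w.1 ^ (2 * i.1)
          + Qt i w.2 * w.1 ^ (2 * i.1 + 1))
      + φ w * w.1 ^ (2 * n))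
    (hgdef' : ∀ w : YPQ n, g' w = r' w.1
      + ∑ i : Fin n, ((w.2.1 i + Pt' i w.2) * w.1 ^ (2 * i.1)
          + Qt' i w.2 * w.1 ^ (2 * i.1 + 1))
      + φ' w * w.1 ^ (2 * n))
    (Ψ : XYPQ n → XYPQ n) (hΨ : IsLocalSymp1 n Ψ)
    (hy : ∀ᶠ z in 𝓝 (0 : XYPQ n), (Ψ z).2.1 = z.2.1)
    (hconj : ∀ᶠ z in 𝓝 (0 : XYPQ n),
      (Ψ z).1 ^ 2 + g' (Ψ z).2 = z.1 ^ 2 + g z.2) :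
    (∀ᶠ y in 𝓝 (0 : ℝ), r y = r' y) ∧
      (∀ᶠ w in 𝓝 (0 : YPQ n), φ w = φ' w) ∧
      (∀ i : Fin n, ∀ᶠ w in 𝓝 (0 : PQ n), Pt i w = Pt' i w) ∧
      (∀ i : Fin n, ∀ᶠ w in 𝓝 (0 : PQ n), Qt i w = Qt' i w) :=
  constrained_hamiltonian_invariants_general n r r' φ φ' Pt Qt Pt' Qt' hφsm hφsm' hφ0 hφ0' hQd' hPI
    hQI hPI' hQI' g g' hgdef hgdef' Ψ hΨ hy hconj
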